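/- For every integer n ≥ 2, any finite totally ordered effect algebra with n elements is isomorphic to the scale effect algebra S_n = {0, 1/(n-1), 2/(n-1), …, 1} ⊂ [0,1], where x ⊕ y is defined iff x + y ≤ 1 and equals x + y. In particular, up to isomorphism there is exactly one totally ordered effect algebra of each finite cardinality n ≥ 2. -/

import Mathlib

/-!
In a finite chain the least nonzero element `a` generates everything: if `e ≠ 0` then
`e = a ⊕ g`, and cancelling `a` shows `g ≤ (k - 1) • a` whenever `e ≤ k • a`, so every element is
`k • a`, with `k` unique because `a ≠ 0`. The multiples `k • a` are defined exactly for
`k ≤ m`, where `m • a = 1`, and `j • a ⊕ k • a = (j + k) • a`; hence `k • a ↦ k / m` is an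
isomorphism onto the scale with `m + 1` points.
-/

/-- An effect algebra: a set with `zero`, `one`, a partial commutative associative
sum (modelled as an `Option`-valued operation), unique complements, and
`e ⊕ 1` defined only for `e = 0`. -/
structure EffectAlgebra (E : Type*) where
  zero : E
  one : E
  add : E → E → Option E
  comm : ∀ e f, add e f = add f e
  assoc : ∀ e f g, (add e f).bind (fun s => add s g) = (add f g).bind (fun s => add e s)
  compl : E → E
  add_compl : ∀ e, add e (compl e) = some one
  compl_unique : ∀ e f, add e f = some one → f = compl e
  one_max : ∀ e f, add e one = some f → e = zero

namespace EffectAlgebra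

variable {E : Type*}

/-- Intrinsic order: `e ≤ f` iff `f = e ⊕ g` for some `g`. -/
def le (A : EffectAlgebra E) (e f : E) : Prop := ∃ g, A.add e g = some f

/-- Iterated sum `e ⊕ e ⊕ ⋯ ⊕ e` (`n` copies), when defined. -/
def nsum (A : EffectAlgebra E) (e : E) : ℕ → Option E
  | 0 => some A.zero
  | n + 1 => (nsum A e n).bind (fun s => A.add e s)

end EffectAlgebra

/-- The underlying set `{k/(n-1) : 0 ≤ k ≤ n-1}` of the scale effect algebra `S_n`. -/
def scaleSet (n : ℕ) : Set ℝ := {x | ∃ k : ℕ, k ≤ n - 1 ∧ x = (k : ℝ) / ((n : ℝ) - 1)}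

namespace EffectAlgebra

variable {E : Type*} (A : EffectAlgebra E)

lemma assoc_right {e f g s t : E} (hs : A.add e f = some s) (ht : A.add s g = some t) :
    ∃ u, A.add f g = some u ∧ A.add e u = some t := by
  have h := A.assoc e f g
  rw [hs, Option.bind_some, ht] at h
  exact Option.bind_eq_some_iff.mp h.symm

lemma assoc_left {e f g u t : E} (hu : A.add f g = some u) (ht : A.add e u = some t) :
    ∃ s, A.add e f = some s ∧ A.add s g = some t := by
  rw [A.comm] at hu ht
  obtain ⟨s, hs, hst⟩ := A.assoc_right hu ht
  exact ⟨s, by rwa [A.comm], by rwa [A.comm]⟩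

lemma compl_compl (e : E) : A.compl (A.compl e) = e :=
  (A.compl_unique _ _ (by rw [A.comm]; exact A.add_compl e)).symm

lemma compl_one : A.compl A.one = A.zero :=
  A.one_max _ A.one (by rw [A.comm]; exact A.add_compl A.one)

lemma compl_zero : A.compl A.zero = A.one := by
  rw [← A.compl_one, A.compl_compl]

lemma add_zero (e : E) : A.add e A.zero = some e := by
  suffices h : ∀ e, A.add (A.compl e) A.zero = some (A.compl e) by
    simpa only [A.compl_compl] using h (A.compl e)
  intro e
  have h1 : A.add A.one A.zero = some A.one := by
    simpa only [A.compl_one] using A.add_compl A.one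
  obtain ⟨s, hs, hes⟩ := A.assoc_right (A.add_compl e) h1
  rwa [A.compl_unique e s hes] at hs

lemma zero_add (e : E) : A.add A.zero e = some e := by
  rw [A.comm]; exact A.add_zero e

lemma compl_add_of_add_eq {c e w : E} (h : A.add c e = some w) :
    A.add (A.compl w) c = some (A.compl e) := by
  obtain ⟨d, hd, hcd⟩ := A.assoc_right h (A.add_compl w)
  rw [A.compl_unique c d hcd] at hd
  obtain ⟨u, hu, heu⟩ := A.assoc_right hd (by rw [A.comm]; exact A.add_compl c)
  rwa [A.compl_unique e u heu] at hu

lemma add_left_cancel {c e f w : E} (he : A.add c e = some w) (hf : A.add c f = some w) :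
    e = f := by
  have h := A.compl_add_of_add_eq he
  rw [A.compl_add_of_add_eq hf, Option.some_inj] at h
  rw [← A.compl_compl e, ← h, A.compl_compl]

lemma eq_zero_of_add_eq_zero {e f : E} (h : A.add e f = some A.zero) : e = A.zero := by
  obtain ⟨u, hu, -⟩ := A.assoc_right (by rwa [A.comm]) (A.zero_add A.one)
  exact A.one_max e u hu

lemma le_refl (e : E) : A.le e e := ⟨A.zero, A.add_zero e⟩

lemma le_one (e : E) : A.le e A.one := ⟨A.compl e, A.add_compl e⟩

lemma le_trans {e f g : E} : A.le e f → A.le f g → A.le e g := by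
  rintro ⟨x, hx⟩ ⟨y, hy⟩
  obtain ⟨s, -, hs⟩ := A.assoc_right hx hy
  exact ⟨s, hs⟩

lemma le_of_add_le_add {a g e t u : E} (hg : A.add a g = some e) (ht : A.add a t = some u)
    (h : A.le e u) : A.le g t := by
  obtain ⟨s, hs⟩ := h
  obtain ⟨d, hd, had⟩ := A.assoc_right hg hs
  exact ⟨s, by rw [hd, A.add_left_cancel had ht]⟩

lemma nsum_succ (a : E) (k : ℕ) : A.nsum a (k + 1) = (A.nsum a k).bind (A.add a) := rfl

lemma nsum_succ_eq_some {a y : E} {k : ℕ} :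
    A.nsum a (k + 1) = some y ↔ ∃ x, A.nsum a k = some x ∧ A.add a x = some y :=
  Option.bind_eq_some_iff

lemma nsum_add {a x y : E} {j k : ℕ} (hx : A.nsum a j = some x) (hy : A.nsum a k = some y) :
    A.nsum a (j + k) = A.add x y := by
  induction j generalizing x with
  | zero => rw [Nat.zero_add, hy, ← Option.some_inj.mp hx, A.zero_add]
  | succ j ih =>
    obtain ⟨x', hx', hax⟩ := A.nsum_succ_eq_some.mp hx
    rw [Nat.add_right_comm, nsum_succ, ih hx', ← A.assoc, hax, Option.bind_some]

lemma nsum_isSome_of_le {a : E} {j k : ℕ} (hjk : j ≤ k) (hk : (A.nsum a k).isSome) :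
    (A.nsum a j).isSome := by
  induction k, hjk using Nat.le_induction with
  | base => exact hk
  | succ k _ ih => exact ih (Option.isSome_of_isSome_bind hk)

lemma nsum_inj {a x : E} (ha : a ≠ A.zero) {j k : ℕ} (hj : A.nsum a j = some x)
    (hk : A.nsum a k = some x) : j = k := by
  wlog hjk : j ≤ k generalizing j k
  · exact (this hk hj (by omega)).symm
  obtain ⟨d, rfl⟩ := Nat.exists_eq_add_of_le hjk
  obtain ⟨y, hy⟩ := Option.isSome_iff_exists.mp
    (A.nsum_isSome_of_le (Nat.le_add_left d j) (Option.isSome_iff_exists.mpr ⟨_, hk⟩))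
  rw [A.nsum_add hj hy] at hk
  have hy0 : y = A.zero := A.add_left_cancel hk (A.add_zero x)
  cases d with
  | zero => rfl
  | succ d =>
    obtain ⟨z, -, haz⟩ := A.nsum_succ_eq_some.mp hy
    exact absurd (A.eq_zero_of_add_eq_zero (hy0 ▸ haz)) ha

lemma nsum_isSome_iff {a : E} (ha : a ≠ A.zero) {m k : ℕ} (hm : A.nsum a m = some A.one) :
    (A.nsum a k).isSome ↔ k ≤ m := by
  refine ⟨fun hk => ?_, fun hkm => A.nsum_isSome_of_le hkm (Option.isSome_iff_exists.mpr ⟨_, hm⟩)⟩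
  by_contra! hmk
  obtain ⟨y, hy⟩ := Option.isSome_iff_exists.mp (A.nsum_isSome_of_le hmk hk)
  rw [nsum_succ, hm, Option.bind_some] at hy
  exact ha (A.one_max a y hy)

def IsLeastNonzero (a : E) : Prop := a ≠ A.zero ∧ ∀ e, e ≠ A.zero → A.le a e

lemma exists_isLeastNonzero [Finite E] [Nontrivial E] (htot : ∀ a b : E, A.le a b ∨ A.le b a) :
    ∃ a, A.IsLeastNonzero a := by
  let _ : Preorder E :=
    { le := A.le, le_refl := A.le_refl, le_trans := fun _ _ _ => A.le_trans }
  obtain ⟨a, ha, hmin⟩ := (Set.toFinite {e : E | e ≠ A.zero}).exists_minimal (exists_ne A.zero)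
  exact ⟨a, ha, fun e he => (htot a e).elim id fun hea => hmin he hea⟩

namespace IsLeastNonzero

variable {A} {a : E}

lemma add_isSome (ha : A.IsLeastNonzero a) {x : E} (hx : x ≠ A.one) : (A.add a x).isSome := by
  have hcx : A.compl x ≠ A.zero := fun h => hx (by rw [← A.compl_compl x, h, A.compl_zero])
  obtain ⟨g, hg⟩ := ha.2 _ hcx
  obtain ⟨s, hs, -⟩ := A.assoc_left hg (A.add_compl x)
  simp [A.comm a x, hs]

lemma exists_nsum_eq_one [Finite E] (ha : A.IsLeastNonzero a) : ∃ m, A.nsum a m = some A.one := by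
  by_contra! hne
  have hdef : ∀ k, ∃ x, A.nsum a k = some x := by
    intro k
    induction k with
    | zero => exact ⟨A.zero, rfl⟩
    | succ k ih =>
      obtain ⟨x, hx⟩ := ih
      rw [nsum_succ, hx, Option.bind_some, ← Option.isSome_iff_exists]
      exact ha.add_isSome fun h => hne k (h ▸ hx)
  choose f hf using hdef
  exact not_injective_infinite_finite f fun j k h => A.nsum_inj ha.1 (hf j) (by rw [h]; exact hf k)

lemma exists_nsum_eq (ha : A.IsLeastNonzero a) {m : ℕ} (hm : A.nsum a m = some A.one) (e : E) :
    ∃ k, A.nsum a k = some e := by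
  suffices key : ∀ k e x, A.nsum a k = some x → A.le e x → ∃ j, A.nsum a j = some e from
    key m e _ hm (A.le_one e)
  intro k
  induction k with
  | zero =>
    rintro e x hx ⟨g, hg⟩
    obtain rfl := Option.some_inj.mp hx
    exact ⟨0, by rw [A.eq_zero_of_add_eq_zero hg]; rfl⟩
  | succ k ih =>
    intro e x hx hex
    by_cases he : e = A.zero
    · exact ⟨0, by rw [he]; rfl⟩
    obtain ⟨t, ht, hat⟩ := A.nsum_succ_eq_some.mp hx
    -- peel one copy of `a` off both `e = a ⊕ g` and `x = a ⊕ t`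
    obtain ⟨g, hg⟩ := ha.2 e he
    obtain ⟨j, hj⟩ := ih g t ht (A.le_of_add_le_add hg hat hex)
    exact ⟨j + 1, by rw [nsum_succ, hj, Option.bind_some, hg]⟩

end IsLeastNonzero

theorem exists_natScale [Finite E] [Nontrivial E] (htot : ∀ a b : E, A.le a b ∨ A.le b a) :
    ∃ (m : ℕ) (ι : E → ℕ), (∀ e, ι e ≤ m) ∧ Function.Injective ι ∧ (∀ k ≤ m, ∃ e, ι e = k) ∧
      ι A.one = m ∧ (∀ e f, (A.add e f).isSome ↔ ι e + ι f ≤ m) ∧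
      (∀ e f g, A.add e f = some g → ι g = ι e + ι f) := by
  obtain ⟨a, ha⟩ := A.exists_isLeastNonzero htot
  obtain ⟨m, hm⟩ := ha.exists_nsum_eq_one
  choose ι hι using ha.exists_nsum_eq hm
  have hιk : ∀ {e k}, A.nsum a k = some e → ι e = k := A.nsum_inj ha.1 (hι _)
  have hsum : ∀ e f, A.add e f = A.nsum a (ι e + ι f) := fun e f => (A.nsum_add (hι e) (hι f)).symm
  have hdef : ∀ k, (A.nsum a k).isSome ↔ k ≤ m := fun k => A.nsum_isSome_iff ha.1 hm
  refine ⟨m, ι, fun e => (hdef _).mp (by simp [hι e]), fun e f h => ?_, fun k hk => ?_, hιk hm,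
    fun e f => by rw [hsum, hdef], fun e f g h => hιk (by rw [← hsum, h])⟩
  · exact Option.some_inj.mp (by rw [← hι e, ← hι f, h])
  · obtain ⟨e, he⟩ := Option.isSome_iff_exists.mp ((hdef k).mpr hk)
    exact ⟨e, hιk he⟩

end EffectAlgebra

theorem totallyOrdered_iso_scale {E : Type*} [Fintype E] (A : EffectAlgebra E)
    (n : ℕ) (hn : 2 ≤ n) (hcard : Fintype.card E = n)
    (htot : ∀ a b : E, A.le a b ∨ A.le b a) :
    ∃ Θ : E → ℝ,
      (∀ e, Θ e ∈ scaleSet n) ∧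
      Function.Injective Θ ∧
      (∀ x ∈ scaleSet n, ∃ e, Θ e = x) ∧
      Θ A.one = 1 ∧
      (∀ e f, (∃ g, A.add e f = some g) ↔ Θ e + Θ f ≤ 1) ∧
      (∀ e f g, A.add e f = some g → Θ g = Θ e + Θ f) := by
  have : Nontrivial E := Fintype.one_lt_card_iff_nontrivial.mp (by omega)
  obtain ⟨m, ι, hle, hinj, hsurj, hone, hdef, hadd⟩ := A.exists_natScale htot
  obtain rfl : n = m + 1 := by
    rw [← hcard, ← Fintype.card_fin (m + 1)]
    refine Fintype.card_of_bijective (f := fun e => ⟨ι e, Nat.lt_succ_of_le (hle e)⟩)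
      ⟨fun e f h => hinj (congrArg Fin.val h), fun k => ?_⟩
    exact (hsurj k (Nat.le_of_lt_succ k.2)).imp fun e he => Fin.ext he
  have hm : ((m + 1 : ℕ) : ℝ) - 1 = m := by push_cast; ring
  have hm0 : (0 : ℝ) < m := by exact_mod_cast (by omega : 0 < m)
  refine ⟨fun e => ι e / m, fun e => ⟨ι e, by simpa using hle e, by rw [hm]⟩,
    fun e f h => hinj (by exact_mod_cast (div_left_inj' hm0.ne').mp h), ?_,
    by simp [hone, hm0.ne'], fun e f => ?_, fun e f g h => by simp [hadd e f g h, add_div]⟩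
  · rintro x ⟨k, hk, rfl⟩
    obtain ⟨e, rfl⟩ := hsurj k (by omega)
    exact ⟨e, by rw [hm]⟩
  · rw [← Option.isSome_iff_exists, hdef, ← add_div, div_le_one hm0]
    exact_mod_cast Iff.rfl
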